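/- Every right Prüfer order S in a simple Artinian ring Q is a right Prüfer ν-multiplication order. -/

import Mathlib

namespace Paper

variable {Q : Type*} [Ring Q]

/-- `I` is a right `S`-submodule of `Q` (an additive subgroup closed under
right multiplication by elements of `S`). -/
def IsRightSubmodule (S I : Set Q) : Prop :=
  (0 : Q) ∈ I ∧ (∀ x ∈ I, ∀ y ∈ I, x + y ∈ I) ∧ (∀ x ∈ I, -x ∈ I) ∧
    ∀ x ∈ I, ∀ s ∈ S, x * s ∈ I

/-- `I` is a left `S`-submodule of `Q`. -/
def IsLeftSubmodule (S I : Set Q) : Prop :=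
  (0 : Q) ∈ I ∧ (∀ x ∈ I, ∀ y ∈ I, x + y ∈ I) ∧ (∀ x ∈ I, -x ∈ I) ∧
    ∀ x ∈ I, ∀ s ∈ S, s * x ∈ I

/-- A right `S`-ideal of `Q`: a right `S`-submodule of `Q` containing a regular
element of `S` and such that `u • I ⊆ S` for some unit `u` of `Q`. -/
def IsRightIdealOfOrder (S I : Set Q) : Prop :=
  IsRightSubmodule S I ∧ (∃ a ∈ I, a ∈ S ∧ a ∈ nonZeroDivisors Q) ∧
    ∃ u : Q, IsUnit u ∧ ∀ x ∈ I, u * x ∈ S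

/-- A left `S`-ideal of `Q`. -/
def IsLeftIdealOfOrder (S I : Set Q) : Prop :=
  IsLeftSubmodule S I ∧ (∃ a ∈ I, a ∈ S ∧ a ∈ nonZeroDivisors Q) ∧
    ∃ u : Q, IsUnit u ∧ ∀ x ∈ I, x * u ∈ S

/-- `(A : B)_r = {q ∈ Q : q B ⊆ A}`. -/
def colonR (A B : Set Q) : Set Q := {q | ∀ b ∈ B, q * b ∈ A}

/-- `(A : B)_l = {q ∈ Q : B q ⊆ A}`. -/
def colonL (A B : Set Q) : Set Q := {q | ∀ b ∈ B, b * q ∈ A}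

/-- The `ν`-operation on right `S`-ideals: `I_ν = (S : (S : I)_l)_r`. -/
def nuR (S I : Set Q) : Set Q := colonR S (colonL S I)

/-- The `ν`-operation on left `S`-ideals: `_νJ = (S : (S : J)_r)_l`. -/
def nuL (S J : Set Q) : Set Q := colonL S (colonR S J)

/-- The right `S`-module generated by `a 0, …, a (n-1)`. -/
def rightSpan (S : Set Q) {n : ℕ} (a : Fin n → Q) : Set Q :=
  {q | ∃ s : Fin n → Q, (∀ i, s i ∈ S) ∧ q = ∑ i, a i * s i}

/-- `F` is finitely generated as a right `S`-module. -/
def IsFGRight (S F : Set Q) : Prop := ∃ (n : ℕ) (a : Fin n → Q), F = rightSpan S a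

/-- The left `S`-module generated by `a 0, …, a (n-1)`. -/
def leftSpan (S : Set Q) {n : ℕ} (a : Fin n → Q) : Set Q :=
  {q | ∃ s : Fin n → Q, (∀ i, s i ∈ S) ∧ q = ∑ i, s i * a i}

/-- `F` is finitely generated as a left `S`-module. -/
def IsFGLeft (S F : Set Q) : Prop := ∃ (n : ℕ) (a : Fin n → Q), F = leftSpan S a

/-- The `τ`-operation (the finite-type operation associated to `ν`):
`I^τ` is the union of `F_ν` over all finitely generated right `S`-ideals `F ⊆ I`. -/
def tauR (S I : Set Q) : Set Q :=
  {q | ∃ F : Set Q, IsRightIdealOfOrder S F ∧ IsFGRight S F ∧ F ⊆ I ∧ q ∈ nuR S F}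

/-- The left-handed `τ`-operation. -/
def tauL (S I : Set Q) : Set Q :=
  {q | ∃ F : Set Q, IsLeftIdealOfOrder S F ∧ IsFGLeft S F ∧ F ⊆ I ∧ q ∈ nuL S F}

/-- `S` is an order in `Q`: a subring such that every regular element of `S` is a unit
of `Q` and every element of `Q` is both a right fraction and a left fraction over `S`
(by Goldie's theorem, for `Q` simple Artinian this says exactly that `S` is a prime
Goldie ring with classical quotient ring `Q`). -/
def IsOrderIn (S : Set Q) : Prop :=
  (∃ R : Subring Q, (R : Set Q) = S) ∧
  (∀ s ∈ S, s ∈ nonZeroDivisors Q → IsUnit s) ∧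
  (∀ q : Q, ∃ a ∈ S, ∃ s ∈ S, IsUnit s ∧ q * s = a) ∧
  (∀ q : Q, ∃ b ∈ S, ∃ t ∈ S, IsUnit t ∧ t * q = b)

/-- The principal right `S`-module `qS`. -/
def principalRight (S : Set Q) (q : Q) : Set Q := {x | ∃ s ∈ S, x = q * s}

/-- The principal left `S`-module `Sq`. -/
def principalLeft (S : Set Q) (q : Q) : Set Q := {x | ∃ s ∈ S, x = s * q}

/-- `S` is a right `ν`-Bezout order: `I_ν` is right principal for every finitely
generated integral right `S`-ideal `I`. -/
def IsRightNuBezout (S : Set Q) : Prop :=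
  ∀ I : Set Q, IsRightIdealOfOrder S I → IsFGRight S I → I ⊆ S →
    ∃ q : Q, nuR S I = principalRight S q

/-- `S` is a left `ν`-Bezout order. -/
def IsLeftNuBezout (S : Set Q) : Prop :=
  ∀ I : Set Q, IsLeftIdealOfOrder S I → IsFGLeft S I → I ⊆ S →
    ∃ q : Q, nuL S I = principalLeft S q

/-- A `ν`-Bezout order: an order which is right and left `ν`-Bezout. -/
def IsNuBezoutOrder (S : Set Q) : Prop := IsOrderIn S ∧ IsRightNuBezout S ∧ IsLeftNuBezout S

/-- `S` is a right Bezout order: every finitely generated right ideal of `S`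
is principal. -/
def IsRightBezout (S : Set Q) : Prop :=
  ∀ I : Set Q, I ⊆ S → IsRightSubmodule S I → IsFGRight S I →
    ∃ q : Q, I = principalRight S q

/-- `S` is a left Bezout order. -/
def IsLeftBezout (S : Set Q) : Prop :=
  ∀ I : Set Q, I ⊆ S → IsLeftSubmodule S I → IsFGLeft S I →
    ∃ q : Q, I = principalLeft S q

/-- A Bezout order: an order which is right and left Bezout. -/
def IsBezoutOrder (S : Set Q) : Prop := IsOrderIn S ∧ IsRightBezout S ∧ IsLeftBezout S

/-- `b` is a right-divisor of `a` (in `S`): `a = b * s` for some `s ∈ S`. -/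
def IsRightDivisor (S : Set Q) (b a : Q) : Prop := ∃ s ∈ S, a = b * s

/-- `b` is a left-divisor of `a` (in `S`): `a = s * b` for some `s ∈ S`. -/
def IsLeftDivisor (S : Set Q) (b a : Q) : Prop := ∃ s ∈ S, a = s * b

/-- `d` is a left greatest common divisor of `a` and `b`. -/
def IsLGCD (S : Set Q) (a b d : Q) : Prop :=
  IsLeftDivisor S d a ∧ IsLeftDivisor S d b ∧
    ∀ c : Q, IsLeftDivisor S c a → IsLeftDivisor S c b → IsLeftDivisor S c d

/-- `d` is a right greatest common divisor of `a` and `b`. -/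
def IsRGCD (S : Set Q) (a b d : Q) : Prop :=
  IsRightDivisor S d a ∧ IsRightDivisor S d b ∧
    ∀ c : Q, IsRightDivisor S c a → IsRightDivisor S c b → IsRightDivisor S c d

/-- `P` is a two-sided ideal of (the ring) `S`. -/
def IsTwoSidedIdealOf (S P : Set Q) : Prop :=
  P ⊆ S ∧ (0 : Q) ∈ P ∧ (∀ x ∈ P, ∀ y ∈ P, x + y ∈ P) ∧ (∀ x ∈ P, -x ∈ P) ∧
    ∀ x ∈ P, ∀ s ∈ S, x * s ∈ P ∧ s * x ∈ P

/-- `P` is a completely prime (proper, two-sided) ideal of `S`. -/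
def IsCompletelyPrimeIdealOf (S P : Set Q) : Prop :=
  IsTwoSidedIdealOf S P ∧ (1 : Q) ∉ P ∧ ∀ a ∈ S, ∀ b ∈ S, a * b ∈ P → a ∈ P ∨ b ∈ P

/-- `P` is a left PF-prime ideal: every `l`-gcd of two nonzero elements of `P`
lies in `P`. -/
def IsLeftPFPrime (S P : Set Q) : Prop :=
  ∀ a ∈ P, ∀ b ∈ P, a ≠ 0 → b ≠ 0 → ∀ d : Q, IsLGCD S a b d → d ∈ P

/-- `S` is localizable at `P`: `S ∖ P` is a left and right Ore set consisting of
regular elements. -/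
def IsLocalizableAt (S P : Set Q) : Prop :=
  (∀ s ∈ S, s ∉ P → s ∈ nonZeroDivisors Q) ∧
  (∀ a ∈ S, ∀ s ∈ S, s ∉ P → ∃ b ∈ S, ∃ t ∈ S, t ∉ P ∧ a * t = s * b) ∧
  (∀ a ∈ S, ∀ s ∈ S, s ∉ P → ∃ b ∈ S, ∃ t ∈ S, t ∉ P ∧ t * a = b * s)

/-- The localization `S_P = {t s⁻¹ : t ∈ S, s ∈ S ∖ P}`, described as the set of
`x` with `x * s ∈ S` for some `s ∈ S ∖ P` witnessing `x * s = t`. -/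
def localizationAt (S P : Set Q) : Set Q :=
  {x | ∃ t ∈ S, ∃ s ∈ S, s ∉ P ∧ x * s = t}

/-- Finite sums of products `a * b` with `a ∈ A`, `b ∈ B` (the product of the
additive subgroups `A` and `B`). -/
def setMul (A B : Set Q) : Set Q :=
  {q | ∃ (n : ℕ) (x y : Fin n → Q), (∀ i, x i ∈ A ∧ y i ∈ B) ∧ q = ∑ i, x i * y i}

/-- The sum `Σ_α F_α` of a family of subsets of `Q` (finite sums of elements of
the members of the family). -/
def famSum {ι : Sort*} (F : ι → Set Q) : Set Q :=
  {q | ∃ (n : ℕ) (g : Fin n → Q), (∀ i, ∃ α, g i ∈ F α) ∧ q = ∑ i, g i}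

/-- `O_l(I) = {q ∈ Q : q I ⊆ I}`. -/
def Ol (I : Set Q) : Set Q := {q | ∀ x ∈ I, q * x ∈ I}

/-- `O_r(I) = {q ∈ Q : I q ⊆ I}`. -/
def Or' (I : Set Q) : Set Q := {q | ∀ x ∈ I, x * q ∈ I}

/-- A star operation on the order `S`: a map on right `S`-ideals (extended
arbitrarily to all subsets) satisfying `S* = S`, `(uI)* = u I*`, monotonicity,
extensivity and idempotence. -/
structure IsStarOp (S : Set Q) (star : Set Q → Set Q) : Prop where
  mapsTo : ∀ I : Set Q, IsRightIdealOfOrder S I → IsRightIdealOfOrder S (star I)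
  star_self : star S = S
  smul_star : ∀ u : Q, IsUnit u → ∀ I : Set Q, IsRightIdealOfOrder S I →
    star {x | ∃ y ∈ I, x = u * y} = {x | ∃ y ∈ star I, x = u * y}
  mono : ∀ I J : Set Q, IsRightIdealOfOrder S I → IsRightIdealOfOrder S J →
    I ⊆ J → star I ⊆ star J
  subset_star : ∀ I : Set Q, IsRightIdealOfOrder S I → I ⊆ star I
  idem : ∀ I : Set Q, IsRightIdealOfOrder S I → star (star I) = star I

/-- A semistar operation on the order `S`: a map on nonzero right `S`-submodules
of `Q` (extended arbitrarily to all subsets) satisfying `(uI)* = u I*`,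
monotonicity, extensivity and idempotence. -/
structure IsSemistarOp (S : Set Q) (star : Set Q → Set Q) : Prop where
  mapsTo : ∀ I : Set Q, IsRightSubmodule S I → I ≠ {0} →
    IsRightSubmodule S (star I) ∧ star I ≠ {0}
  smul_star : ∀ u : Q, IsUnit u → ∀ I : Set Q, IsRightSubmodule S I → I ≠ {0} →
    star {x | ∃ y ∈ I, x = u * y} = {x | ∃ y ∈ star I, x = u * y}
  mono : ∀ I J : Set Q, IsRightSubmodule S I → I ≠ {0} → IsRightSubmodule S J →
    J ≠ {0} → I ⊆ J → star I ⊆ star J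
  subset_star : ∀ I : Set Q, IsRightSubmodule S I → I ≠ {0} → I ⊆ star I
  idem : ∀ I : Set Q, IsRightSubmodule S I → I ≠ {0} → star (star I) = star I

/-- Ascending chain condition on the collection of sets satisfying `P`. -/
def ACCOn {α : Type*} (P : Set α → Prop) : Prop :=
  ∀ f : ℕ → Set α, (∀ n, P (f n)) → (∀ n, f n ⊆ f (n + 1)) →
    ∃ N : ℕ, ∀ n : ℕ, N ≤ n → f n = f N

/-- `S` is a right Prüfer order: `(S : I)_l I = S` and `I (S : I)_l = O_l(I)` for
every finitely generated right `S`-ideal `I`. -/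
def IsRightPruferOrder (S : Set Q) : Prop :=
  ∀ I : Set Q, IsRightIdealOfOrder S I → IsFGRight S I →
    setMul (colonL S I) I = S ∧ setMul I (colonL S I) = Ol I

/-- `S` is a left Prüfer order. -/
def IsLeftPruferOrder (S : Set Q) : Prop :=
  ∀ J : Set Q, IsLeftIdealOfOrder S J → IsFGLeft S J →
    setMul J (colonR S J) = S ∧ setMul (colonR S J) J = Or' J

/-- A Prüfer order: right and left Prüfer. -/
def IsPruferOrder (S : Set Q) : Prop := IsRightPruferOrder S ∧ IsLeftPruferOrder S

/-- `I ∈ H_r(S)`: `I` is a right `ν`-ideal of finite type, i.e. `I = J_ν` for some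
finitely generated right `S`-ideal `J`. -/
def HrMem (S I : Set Q) : Prop :=
  IsRightIdealOfOrder S I ∧
    ∃ J : Set Q, IsRightIdealOfOrder S J ∧ IsFGRight S J ∧ I = nuR S J

/-- `S` is a right Prüfer `ν`-multiplication order:
`((S:I)_l I)^τ = S` and `(I (S:I)_l)^τ = O_l(I)` for every `I ∈ H_r(S)`. -/
def IsRightPruferNuMultOrder (S : Set Q) : Prop :=
  ∀ I : Set Q, HrMem S I →
    tauR S (setMul (colonL S I) I) = S ∧ tauR S (setMul I (colonL S I)) = Ol I

/-- The Jacobson radical of the subring `R` of `Q`, viewed as a subset of `Q`: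
the set of `x ∈ R` such that `1 - y * x` is invertible in `R` for all `y ∈ R`. -/
def jacobsonSet (R : Subring Q) : Set Q :=
  {x | x ∈ R ∧ ∀ y ∈ R, ∃ z ∈ R, z * (1 - y * x) = 1 ∧ (1 - y * x) * z = 1}

/-- `R` is a Dubrovin valuation ring of `Q`: `R/J(R)` is a simple Artinian ring and
for every `q ∈ Q ∖ R` there are `r, r' ∈ R` with `r * q ∈ R ∖ J(R)` and
`q * r' ∈ R ∖ J(R)`. -/
def IsDubrovinValuationRing (R : Subring Q) : Prop :=
  (∀ c : RingCon R, (∀ x y : R, c x y ↔ ((x : Q) - y) ∈ jacobsonSet R) →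
      IsSimpleRing c.Quotient ∧ IsArtinianRing c.Quotient) ∧
  (∀ q : Q, q ∉ R →
    (∃ r ∈ R, r * q ∈ R ∧ r * q ∉ jacobsonSet R) ∧
    (∃ r' ∈ R, q * r' ∈ R ∧ q * r' ∉ jacobsonSet R))

/-- A discrete Dubrovin valuation ring: a non-Artinian Dubrovin valuation ring of `Q`
which is maximal among the Dubrovin valuation rings of `Q` different from `Q`, and
with `J(S) ≠ J(S)²`. -/
def IsDiscreteDubrovin (S : Subring Q) : Prop :=
  IsDubrovinValuationRing S ∧ ¬ IsArtinianRing S ∧ S ≠ ⊤ ∧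
    (∀ R : Subring Q, IsDubrovinValuationRing R → R ≠ ⊤ → S ≤ R → R = S) ∧
    jacobsonSet S ≠ setMul (jacobsonSet S) (jacobsonSet S)

/-- `M` is a maximal (two-sided) ideal of `S`. -/
def IsMaximalIdealOf (S M : Set Q) : Prop :=
  IsTwoSidedIdealOf S M ∧ M ≠ S ∧
    ∀ N : Set Q, IsTwoSidedIdealOf S N → M ⊆ N → N = M ∨ N = S

/-- The elements of `S` regular modulo `M`. -/
def regModulo (S M : Set Q) : Set Q :=
  {s | s ∈ S ∧ ∀ a ∈ S, (s * a ∈ M → a ∈ M) ∧ (a * s ∈ M → a ∈ M)}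

/-- The localization of `S` at the maximal ideal `M`: the ring of quotients of `S`
with respect to the Ore set of elements of `S` regular modulo `M`. -/
def localizationAtMax (S M : Set Q) : Set Q :=
  {q | ∃ a ∈ S, ∃ s ∈ regModulo S M, q * s = a}

end Paper

section SkewPoly

/-- The skew polynomial ring `K[x,σ]` (Ore extension of the division ring `K` by the
automorphism `σ`), presented axiomatically: a ring `A` together with an embedding
`ι : K →+* A`, an element `X` with `X * ι a = ι (σ a) * X`, such that every element
of `A` is uniquely of the form `Σ ι (c i) * X ^ i` (with `coeff` producing the
coefficients). -/
structure SkewPolyRing (K : Type*) [DivisionRing K] (σ : K ≃+* K)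
    (A : Type*) [Ring A] where
  ι : K →+* A
  X : A
  coeff : A → (ℕ →₀ K)
  X_mul : ∀ a : K, X * ι a = ι (σ a) * X
  sum_coeff : ∀ f : A, ((coeff f).sum fun i a => ι a * X ^ i) = f
  coeff_sum : ∀ c : ℕ →₀ K, coeff (c.sum fun i a => ι a * X ^ i) = c

end SkewPoly

/-!
If `J` is a finitely generated right ideal of a right Prüfer order `S` and `C = (S : J)_l`,
then `C J = S` and `1 ∈ J C`. For `I = J_ν` one has `(S : I)_l = C`, and writing
`1 = Σ cᵢ jᵢ` resp. `1 = Σ jᵢ cᵢ` as elements of `C J` resp. `J C` shows that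
`C I`, `I C` and `O_l(I)` all collapse to `S`. Finally `S^τ = S`, because `S` is itself
a finitely generated right `S`-ideal and `1 ∈ (S : F)_l` for every `F ⊆ S`.
-/

namespace Paper

variable {Q : Type*} [Ring Q]

section setMul

variable {A A' B B' : Set Q}

theorem setMul_mono (hA : A ⊆ A') (hB : B ⊆ B') : setMul A B ⊆ setMul A' B' := by
  rintro q ⟨n, x, y, hxy, rfl⟩
  exact ⟨n, x, y, fun i => ⟨hA (hxy i).1, hB (hxy i).2⟩, rfl⟩

theorem setMul_subset_subring (R : Subring Q) (h : ∀ a ∈ A, ∀ b ∈ B, a * b ∈ R) :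
    setMul A B ⊆ R := by
  rintro q ⟨n, x, y, hxy, rfl⟩
  exact R.sum_mem fun i _ => h _ (hxy i).1 _ (hxy i).2

theorem mem_setMul_of_one_mem_left {q : Q} (h1 : (1 : Q) ∈ setMul A B)
    (hq : ∀ a ∈ A, q * a ∈ A') : q ∈ setMul A' B := by
  obtain ⟨n, x, y, hxy, h⟩ := h1
  refine ⟨n, fun i => q * x i, y, fun i => ⟨hq _ (hxy i).1, (hxy i).2⟩, ?_⟩
  simp only [mul_assoc, ← Finset.mul_sum, ← h, mul_one]

theorem mem_setMul_of_one_mem_right {q : Q} (h1 : (1 : Q) ∈ setMul A B)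
    (hq : ∀ b ∈ B, b * q ∈ B') : q ∈ setMul A B' := by
  obtain ⟨n, x, y, hxy, h⟩ := h1
  refine ⟨n, x, fun i => y i * q, fun i => ⟨(hxy i).1, hq _ (hxy i).2⟩, ?_⟩
  simp only [← mul_assoc, ← Finset.sum_mul, ← h, one_mul]

end setMul

theorem subset_nuR (S I : Set Q) : I ⊆ nuR S I :=
  fun _ hx _ hc => hc _ hx

theorem colonL_nuR (S I : Set Q) : colonL S (nuR S I) = colonL S I :=
  Set.Subset.antisymm (fun _ hc _ hb => hc _ (subset_nuR S I hb)) fun _ hc _ hp => hp _ hc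

theorem one_mem_Ol (I : Set Q) : (1 : Q) ∈ Ol I :=
  fun x hx => by rwa [one_mul]

section Subring

variable (R : Subring Q)

theorem mul_mem_colonL {I : Set Q} {x s : Q} (hx : x ∈ colonL (R : Set Q) I) (hs : s ∈ R) :
    x * s ∈ colonL (R : Set Q) I :=
  fun b hb => by rw [← mul_assoc]; exact R.mul_mem (hx b hb) hs

theorem isRightIdealOfOrder_subring : IsRightIdealOfOrder (R : Set Q) R :=
  ⟨⟨R.zero_mem, fun _ hx _ hy => R.add_mem hx hy, fun _ hx => R.neg_mem hx,
      fun _ hx _ hs => R.mul_mem hx hs⟩,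
    ⟨1, R.one_mem, R.one_mem, one_mem _⟩, ⟨1, isUnit_one, fun x hx => by rwa [one_mul]⟩⟩

theorem isFGRight_subring : IsFGRight (R : Set Q) R := by
  refine ⟨1, fun _ => 1, Set.ext fun q => ⟨fun hq => ⟨fun _ => q, fun _ => hq, by simp⟩, ?_⟩⟩
  rintro ⟨s, hs, rfl⟩
  simpa using hs 0

theorem tauR_subring : tauR (R : Set Q) R = R := by
  refine Set.Subset.antisymm ?_ fun s hs =>
    ⟨R, isRightIdealOfOrder_subring R, isFGRight_subring R, le_rfl, subset_nuR _ _ hs⟩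
  rintro q ⟨F, -, -, hFR, hq⟩
  simpa using hq 1 fun b hb => by simpa using hFR hb

variable {R} {J : Set Q}

theorem setMul_colonL_nuR (hJ : setMul (colonL (R : Set Q) J) J = R) :
    setMul (colonL (R : Set Q) J) (nuR R J) = R := by
  refine Set.Subset.antisymm (setMul_subset_subring R fun x hx y hy => ?_) fun s hs =>
    setMul_mono subset_rfl (subset_nuR _ J) (hJ.symm.subset hs)
  have h1 : (1 : Q) ∈ setMul (colonL (R : Set Q) J) J := hJ.symm.subset R.one_mem
  exact hJ.subset <|
    mem_setMul_of_one_mem_left h1 fun c hc => mul_assoc x y c ▸ mul_mem_colonL R hx (hy c hc)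

theorem setMul_nuR_colonL (h1 : (1 : Q) ∈ setMul J (colonL (R : Set Q) J)) :
    setMul (nuR R J) (colonL (R : Set Q) J) = R :=
  Set.Subset.antisymm (setMul_subset_subring R fun _ hp _ hx => hp _ hx) fun _ hs =>
    setMul_mono (subset_nuR _ J) le_rfl
      (mem_setMul_of_one_mem_right h1 fun _ hc => mul_mem_colonL R hc hs)

theorem Ol_nuR (h1 : (1 : Q) ∈ setMul J (colonL (R : Set Q) J)) : Ol (nuR R J) = R := by
  refine Set.Subset.antisymm (fun q hq => ?_) fun s hs p hp x hx => ?_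
  · exact setMul_subset_subring R (A := nuR R J) (fun p hp x hx => hp x hx)
      (mem_setMul_of_one_mem_left h1 fun a ha => hq a (subset_nuR _ J ha))
  · rw [mul_assoc]
    exact R.mul_mem hs (hp x hx)

end Subring

end Paper

open Paper in
theorem stmt18_general {Q : Type*} [Ring Q]
    (S : Set Q) (hS : IsOrderIn S) (hP : IsRightPruferOrder S) :
    IsRightPruferNuMultOrder S := by
  obtain ⟨⟨R, rfl⟩, -⟩ := hS
  rintro I ⟨-, J, hJ, hJfg, rfl⟩
  obtain ⟨hCJ, hJC⟩ := hP J hJ hJfg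
  have h1 : (1 : Q) ∈ setMul J (colonL (R : Set Q) J) := hJC ▸ one_mem_Ol J
  rw [colonL_nuR, setMul_colonL_nuR hCJ, setMul_nuR_colonL h1, Ol_nuR h1, tauR_subring]
  exact ⟨rfl, rfl⟩

open Paper in
/-- Every right Prüfer order in a simple Artinian ring is a right
Prüfer ν-multiplication order. -/
theorem stmt18 {Q : Type*} [Ring Q] [IsSimpleRing Q] [IsArtinianRing Q]
    (S : Set Q) (hS : IsOrderIn S) (hP : IsRightPruferOrder S) :
    IsRightPruferNuMultOrder S :=
  stmt18_general S hS hP
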